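/- Let Φ be a propositional CNF formula and P(Φ) the associated positive logic program (with atoms x, x̄ for each variable X, clause rules deriving 'contr' from negated clause literals, rules deriving 'inconsistent' from x and x̄, 'assigned_j' from x_j or x̄_j, and 'allAssigned' from all assigned_j). Then Φ is satisfiable if and only if the abduction problem ⟨H, P(Φ), O, γ⟩ with H = {x, x̄ : X ∈ var(Φ)}, O = {not contr, not inconsistent, allAssigned}, and γ ≡ 0 has an admissible solution. -/

import Mathlib

/-- A propositional logic-program rule `head :- pos, not neg`.
`head = none` represents a strong constraint (rule with empty head). -/
structure LPRule where
  head : Option ℕ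
  pos : Finset ℕ
  neg : Finset ℕ
deriving DecidableEq

namespace LP

/-- Truth of a rule head w.r.t. an interpretation; an empty head is never true. -/
def headTrue (I : Set ℕ) : Option ℕ → Prop
  | none => False
  | some a => a ∈ I

/-- The body of a rule is true w.r.t. `I`. -/
def bodyTrue (I : Set ℕ) (r : LPRule) : Prop :=
  (∀ b ∈ r.pos, b ∈ I) ∧ (∀ b ∈ r.neg, b ∉ I)

/-- `I` satisfies rule `r`. -/
def satRule (I : Set ℕ) (r : LPRule) : Prop := bodyTrue I r → headTrue I r.head

/-- `I` is a model of the program `P`. -/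
def isModel (P : Set LPRule) (I : Set ℕ) : Prop := ∀ r ∈ P, satRule I r

/-- A positive (negation-free) program. -/
def isPositive (P : Set LPRule) : Prop := ∀ r ∈ P, r.neg = ∅

/-- A constraint-free program (no rules with empty head). -/
def constraintFree (P : Set LPRule) : Prop := ∀ r ∈ P, r.head ≠ none

/-- The Gelfond-Lifschitz reduct `P^I`. -/
def reduct (P : Set LPRule) (I : Set ℕ) : Set LPRule :=
  (fun r => LPRule.mk r.head r.pos ∅) '' {r ∈ P | ∀ b ∈ r.neg, b ∉ I}

/-- `M` is the least model of `P`. -/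
def isLeastModel (P : Set LPRule) (M : Set ℕ) : Prop :=
  isModel P M ∧ ∀ M', isModel P M' → M ⊆ M'

/-- `M` is a stable model of `P`: it is the least model of the reduct `P^M`. -/
def isStable (P : Set LPRule) (M : Set ℕ) : Prop := isLeastModel (reduct P M) M

/-- `facts S` is the set of facts `{p :- | p ∈ S}`. -/
def facts (S : Set ℕ) : Set LPRule := (fun p => LPRule.mk (some p) ∅ ∅) '' S

/-- The atoms occurring in a rule. -/
def ruleAtoms (r : LPRule) : Set ℕ := {a | r.head = some a} ∪ ↑r.pos ∪ ↑r.neg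

/-- The Herbrand base of a program: all atoms occurring in it. -/
def atoms (P : Set LPRule) : Set ℕ := ⋃ r ∈ P, ruleAtoms r

/-- `p` depends on `q`: some rule has head `p` and `q` in its body. -/
def dependsOn (P : Set LPRule) (p q : ℕ) : Prop :=
  ∃ r ∈ P, r.head = some p ∧ (q ∈ r.pos ∨ q ∈ r.neg)

/-- `P` is stratified: no rule with head `p` and `not q` in the body where
`q` transitively depends on `p`. -/
def stratified (P : Set LPRule) : Prop :=
  ∀ r ∈ P, ∀ p, r.head = some p → ∀ q ∈ r.neg, ¬ Relation.TransGen (dependsOn P) q p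

/-- Hypotheses `H` do not occur in rule heads of `P`. -/
def hypFree (P : Set LPRule) (H : Finset ℕ) : Prop :=
  ∀ r ∈ P, ∀ h ∈ H, r.head ≠ some h

/-- `S` is an admissible solution: `S ⊆ H` and some stable model of
`P ∪ facts S` makes all observations true. -/
def admissible (P : Set LPRule) (H obsP obsN : Finset ℕ) (S : Set ℕ) : Prop :=
  S ⊆ ↑H ∧ ∃ M, isStable (P ∪ facts S) M ∧ (∀ o ∈ obsP, o ∈ M) ∧ (∀ o ∈ obsN, o ∉ M)

/-- `sum_γ`: total penalty of the hypotheses of `H` belonging to `S`. -/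
noncomputable def cost (γ : ℕ → NNReal) (H : Finset ℕ) (S : Set ℕ) : NNReal :=
  ∑ h ∈ H, S.indicator γ h

/-- `S` is an optimal solution: admissible with minimal total penalty. -/
def optimal (P : Set LPRule) (H obsP obsN : Finset ℕ) (γ : ℕ → NNReal) (S : Set ℕ) : Prop :=
  admissible P H obsP obsN S ∧
  ∀ S', admissible P H obsP obsN S' → cost γ H S ≤ cost γ H S'

end LP

namespace LP

/-- The atom `contr`. -/
def contrA : ℕ := 0
/-- The atom `inconsistent`. -/
def inconA : ℕ := 1
/-- The atom `allAssigned`. -/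
def allA : ℕ := 2
/-- The atom `x_j` representing variable `X_j`. -/
def xA (j : ℕ) : ℕ := 3 * j + 3
/-- The atom `x̄_j` representing the negation of `X_j`. -/
def xbA (j : ℕ) : ℕ := 3 * j + 4
/-- The atom `assigned_j`. -/
def asgA (j : ℕ) : ℕ := 3 * j + 5

/-- A propositional CNF: a finite set of clauses, each a finite set of literals
`(variable, polarity)`. -/
abbrev CNF := Finset (Finset (ℕ × Bool))

/-- The variables occurring in a CNF. -/
def cnfVars (Φ : CNF) : Finset ℕ := Φ.biUnion fun C => C.image Prod.fst

/-- The rule `contr :- negate(ℓ_1), ..., negate(ℓ_m)` for a clause, where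
`negate(X) = x̄` and `negate(¬X) = x`. -/
def clauseRule (C : Finset (ℕ × Bool)) : LPRule :=
  ⟨some contrA, C.image (fun l => if l.2 then xbA l.1 else xA l.1), ∅⟩

/-- The positive program `P(Φ)` associated with a CNF `Φ`. -/
def cnfProg (Φ : CNF) : Finset LPRule :=
  Φ.image clauseRule ∪
  (cnfVars Φ).biUnion (fun j =>
    {⟨some inconA, {xA j, xbA j}, ∅⟩,
     ⟨some (asgA j), {xA j}, ∅⟩,
     ⟨some (asgA j), {xbA j}, ∅⟩}) ∪
  {⟨some allA, (cnfVars Φ).image asgA, ∅⟩}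

/-- The hypotheses `{x, x̄ : X ∈ var(Φ)}`. -/
def cnfHyp (Φ : CNF) : Finset ℕ := (cnfVars Φ).biUnion fun j => {xA j, xbA j}

/-- Satisfiability of a CNF. -/
def cnfSat (Φ : CNF) : Prop := ∃ τ : ℕ → Bool, ∀ C ∈ Φ, ∃ l ∈ C, τ l.1 = l.2

end LP

/-!
A positive program has a unique stable model, its least model, and every atom of the least model
is supported by a rule whose body holds in it. From a satisfying assignment `τ` we abduce the
literal atoms chosen by `τ`; the least model then consists of these atoms, all `assigned_j` and
`allAssigned`, and derives neither `contr` nor `inconsistent`. Conversely, support of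
`allAssigned` forces every `assigned_j`, hence one of `x_j`, `x̄_j`, into the least model; reading
off `X_j := (x_j ∈ M)`, a clause falsified by this assignment would have its whole body in `M`
and derive `contr`.
-/

namespace LP

section LeastModel

variable {P : Set LPRule} {M : Set ℕ}

theorem reduct_eq_self (hP : isPositive P) (M : Set ℕ) : reduct P M = P := by
  have hfix : ∀ r ∈ P, LPRule.mk r.head r.pos ∅ = r := fun r hr => by
    cases r; cases hP _ hr; rfl
  ext r
  constructor
  · rintro ⟨s, ⟨hs, -⟩, rfl⟩
    exact (hfix s hs).symm ▸ hs
  · intro hr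
    exact ⟨r, ⟨hr, by simp [hP r hr]⟩, hfix r hr⟩

theorem isStable_iff_isLeastModel (hP : isPositive P) : isStable P M ↔ isLeastModel P M := by
  rw [isStable, reduct_eq_self hP]

theorem isPositive_union {Q : Set LPRule} (hP : isPositive P) (hQ : isPositive Q) :
    isPositive (P ∪ Q) := by
  rintro r (hr | hr)
  exacts [hP r hr, hQ r hr]

theorem isPositive_facts (S : Set ℕ) : isPositive (facts S) := by
  rintro r ⟨p, -, rfl⟩
  rfl

theorem isModel_union_facts {S : Set ℕ} : isModel (P ∪ facts S) M ↔ isModel P M ∧ S ⊆ M := by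
  constructor
  · intro h
    exact ⟨fun r hr => h r (Or.inl hr), fun p hp => h _ (Or.inr ⟨p, hp, rfl⟩) ⟨by simp, by simp⟩⟩
  · rintro ⟨hP, hS⟩ r (hr | ⟨p, hp, rfl⟩)
    exacts [hP r hr, fun _ => hS hp]

theorem isModel.head_mem (hM : isModel P M) {a : ℕ} {B : Finset ℕ} (hr : ⟨some a, B, ∅⟩ ∈ P)
    (hB : ∀ b ∈ B, b ∈ M) : a ∈ M :=
  hM _ hr ⟨hB, by simp⟩

theorem isLeastModel.exists_rule_of_mem (hP : isPositive P) (hM : isLeastModel P M) {a : ℕ}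
    (ha : a ∈ M) : ∃ r ∈ P, r.head = some a ∧ ∀ b ∈ r.pos, b ∈ M := by
  by_contra! hunsupp
  suffices isModel P (M \ {a}) from (hM.2 _ this ha).2 rfl
  rintro r hr ⟨hpos, -⟩
  have hhead := hM.1 r hr ⟨fun b hb => (hpos b hb).1, by simp [hP r hr]⟩
  cases hr_head : r.head with
  | none => simp [hr_head, headTrue] at hhead
  | some c =>
    rw [hr_head, headTrue] at hhead
    refine ⟨hhead, fun hca => ?_⟩
    obtain ⟨b, hb, hbM⟩ := hunsupp r hr (hr_head.trans (congrArg some hca))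
    exact hbM (hpos b hb).1

end LeastModel

def litA (j : ℕ) (b : Bool) : ℕ := if b then xA j else xbA j

section Atoms

variable {j k : ℕ} {b c : Bool}

@[simp] theorem litA_true (j : ℕ) : litA j true = xA j := rfl

@[simp] theorem litA_false (j : ℕ) : litA j false = xbA j := rfl

@[simp] theorem litA_inj : litA j b = litA k c ↔ j = k ∧ b = c := by
  cases b <;> cases c <;> simp [xA, xbA] <;> omega

@[simp] theorem asgA_inj : asgA j = asgA k ↔ j = k := by
  simp [asgA]

@[simp] theorem litA_ne_asgA : litA j b ≠ asgA k := by
  cases b <;> simp [xA, xbA, asgA] <;> omega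

@[simp] theorem litA_ne_allA : litA j b ≠ allA := by
  cases b <;> simp [xA, xbA, allA]

@[simp] theorem litA_ne_contrA : litA j b ≠ contrA := by
  cases b <;> simp [xA, xbA, contrA]

@[simp] theorem litA_ne_inconA : litA j b ≠ inconA := by
  cases b <;> simp [xA, xbA, inconA]

@[simp] theorem asgA_ne_allA : asgA j ≠ allA := by
  simp [asgA, allA]

@[simp] theorem asgA_ne_contrA : asgA j ≠ contrA := by
  simp [asgA, contrA]

@[simp] theorem asgA_ne_inconA : asgA j ≠ inconA := by
  simp [asgA, inconA]

@[simp] theorem asgA_ne_litA : asgA k ≠ litA j b := litA_ne_asgA.symm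

@[simp] theorem allA_ne_asgA : allA ≠ asgA j := asgA_ne_allA.symm

@[simp] theorem contrA_ne_asgA : contrA ≠ asgA j := asgA_ne_contrA.symm

@[simp] theorem inconA_ne_asgA : inconA ≠ asgA j := asgA_ne_inconA.symm

@[simp] theorem contrA_ne_allA : contrA ≠ allA := by decide

@[simp] theorem inconA_ne_allA : inconA ≠ allA := by decide

end Atoms

theorem clauseRule_pos (C : Finset (ℕ × Bool)) :
    (clauseRule C).pos = C.image fun l => litA l.1 (!l.2) := by
  simp only [clauseRule, litA, Bool.not_eq_true']
  congr! 2 with l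
  cases l.2 <;> rfl

theorem mem_cnfProg {Φ : CNF} {r : LPRule} :
    r ∈ cnfProg Φ ↔ (∃ C ∈ Φ, clauseRule C = r) ∨
      (∃ j ∈ cnfVars Φ, r = ⟨some inconA, {xA j, xbA j}, ∅⟩ ∨
        ∃ b, r = ⟨some (asgA j), {litA j b}, ∅⟩) ∨
      r = ⟨some allA, (cnfVars Φ).image asgA, ∅⟩ := by
  simp only [cnfProg, Finset.mem_union, Finset.mem_biUnion, Finset.mem_insert,
    Finset.mem_singleton, Finset.mem_image, Bool.exists_bool, litA_true, litA_false]
  grind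

theorem isPositive_cnfProg (Φ : CNF) : isPositive ↑(cnfProg Φ) := by
  intro r hr
  rcases mem_cnfProg.1 hr with ⟨C, -, rfl⟩ | ⟨j, -, rfl | ⟨b, rfl⟩⟩ | rfl <;> rfl

theorem isPositive_cnfProg_union_facts (Φ : CNF) (S : Set ℕ) :
    isPositive (cnfProg Φ ∪ facts S) :=
  isPositive_union (isPositive_cnfProg Φ) (isPositive_facts S)

theorem mem_cnfHyp {Φ : CNF} {p : ℕ} : p ∈ cnfHyp Φ ↔ ∃ j ∈ cnfVars Φ, ∃ b, litA j b = p := by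
  simp only [cnfHyp, Finset.mem_biUnion, Finset.mem_insert, Finset.mem_singleton,
    Bool.exists_bool, litA_true, litA_false]
  grind

section Assignment

variable {Φ : CNF} {τ : ℕ → Bool}

def assignmentHyp (Φ : CNF) (τ : ℕ → Bool) : Set ℕ := (fun j => litA j (τ j)) '' cnfVars Φ

def assignmentModel (Φ : CNF) (τ : ℕ → Bool) : Set ℕ :=
  assignmentHyp Φ τ ∪ asgA '' cnfVars Φ ∪ {allA}

theorem assignmentHyp_subset_cnfHyp : assignmentHyp Φ τ ⊆ cnfHyp Φ := by
  rintro _ ⟨j, hj, rfl⟩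
  exact mem_cnfHyp.2 ⟨j, hj, τ j, rfl⟩

theorem litA_mem_assignmentModel {j : ℕ} {b : Bool} :
    litA j b ∈ assignmentModel Φ τ ↔ j ∈ cnfVars Φ ∧ τ j = b := by
  simp [assignmentModel, assignmentHyp]

theorem contrA_notMem_assignmentModel : contrA ∉ assignmentModel Φ τ := by
  simp [assignmentModel, assignmentHyp]

theorem inconA_notMem_assignmentModel : inconA ∉ assignmentModel Φ τ := by
  simp [assignmentModel, assignmentHyp]

theorem isModel_assignmentModel (hτ : ∀ C ∈ Φ, ∃ l ∈ C, τ l.1 = l.2) :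
    isModel (cnfProg Φ ∪ facts (assignmentHyp Φ τ)) (assignmentModel Φ τ) := by
  refine isModel_union_facts.2 ⟨?_, fun p hp => Or.inl (Or.inl hp)⟩
  rintro r hr ⟨hpos, -⟩
  rcases mem_cnfProg.1 hr with ⟨C, hC, rfl⟩ | ⟨j, hj, rfl | ⟨b, rfl⟩⟩ | rfl
  · obtain ⟨l, hl, hτl⟩ := hτ C hC
    have := hpos _ ((clauseRule_pos C).symm ▸ Finset.mem_image_of_mem _ hl)
    simp [litA_mem_assignmentModel, hτl] at this
  · have h₁ := hpos (litA j true) (by simp)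
    have h₂ := hpos (litA j false) (by simp)
    rw [litA_mem_assignmentModel] at h₁ h₂
    exact absurd (h₁.2.symm.trans h₂.2) Bool.noConfusion
  · exact Or.inl (Or.inr ⟨j, hj, rfl⟩)
  · exact Or.inr rfl

theorem assignmentModel_subset {M : Set ℕ}
    (hM : isModel (cnfProg Φ ∪ facts (assignmentHyp Φ τ)) M) : assignmentModel Φ τ ⊆ M := by
  obtain ⟨hP, hS⟩ := isModel_union_facts.1 hM
  have hasg : ∀ j ∈ cnfVars Φ, asgA j ∈ M := fun j hj =>
    hP.head_mem (mem_cnfProg.2 (Or.inr (Or.inl ⟨j, hj, Or.inr ⟨τ j, rfl⟩⟩)))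
      (by simpa using hS ⟨j, hj, rfl⟩)
  have hall : allA ∈ M :=
    hP.head_mem (mem_cnfProg.2 (Or.inr (Or.inr rfl))) (by simpa using hasg)
  rintro p ((hp | ⟨j, hj, rfl⟩) | rfl)
  exacts [hS hp, hasg j hj, hall]

theorem admissible_assignmentHyp (hτ : ∀ C ∈ Φ, ∃ l ∈ C, τ l.1 = l.2) :
    admissible (cnfProg Φ) (cnfHyp Φ) {allA} {contrA, inconA} (assignmentHyp Φ τ) := by
  refine ⟨assignmentHyp_subset_cnfHyp, assignmentModel Φ τ, ?_, by simp [assignmentModel], ?_⟩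
  · rw [isStable_iff_isLeastModel (isPositive_cnfProg_union_facts Φ _)]
    exact ⟨isModel_assignmentModel hτ, fun _ => assignmentModel_subset⟩
  · simp [contrA_notMem_assignmentModel, inconA_notMem_assignmentModel]

end Assignment

section Completeness

variable {Φ : CNF} {S M : Set ℕ}

theorem asgA_mem_of_allA_mem (hS : S ⊆ cnfHyp Φ) (hM : isLeastModel (cnfProg Φ ∪ facts S) M)
    (hall : allA ∈ M) {j : ℕ} (hj : j ∈ cnfVars Φ) : asgA j ∈ M := by
  obtain ⟨r, hr, hhead, hpos⟩ := hM.exists_rule_of_mem (isPositive_cnfProg_union_facts Φ S) hall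
  rcases hr with hr | ⟨p, hp, rfl⟩
  · rcases mem_cnfProg.1 hr with ⟨C, -, rfl⟩ | ⟨k, -, rfl | ⟨b, rfl⟩⟩ | rfl
    · simp [clauseRule] at hhead
    · simp at hhead
    · simp at hhead
    · exact hpos _ (Finset.mem_image_of_mem _ hj)
  · obtain ⟨k, -, b, rfl⟩ := mem_cnfHyp.1 (hS hp)
    simp at hhead

theorem exists_litA_mem_of_asgA_mem (hS : S ⊆ cnfHyp Φ)
    (hM : isLeastModel (cnfProg Φ ∪ facts S) M) {j : ℕ} (hasg : asgA j ∈ M) :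
    ∃ b, litA j b ∈ M := by
  obtain ⟨r, hr, hhead, hpos⟩ := hM.exists_rule_of_mem (isPositive_cnfProg_union_facts Φ S) hasg
  rcases hr with hr | ⟨p, hp, rfl⟩
  · rcases mem_cnfProg.1 hr with ⟨C, -, rfl⟩ | ⟨k, -, rfl | ⟨b, rfl⟩⟩ | rfl
    · simp [clauseRule] at hhead
    · simp at hhead
    · obtain rfl : k = j := by simpa using hhead
      exact ⟨b, hpos _ (Finset.mem_singleton_self _)⟩
    · simp at hhead
  · obtain ⟨k, -, b, rfl⟩ := mem_cnfHyp.1 (hS hp)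
    simp at hhead

theorem cnfSat_of_admissible
    (h : admissible (cnfProg Φ) (cnfHyp Φ) {allA} {contrA, inconA} S) : cnfSat Φ := by
  classical
  obtain ⟨hS, M, hstab, hobsP, hobsN⟩ := h
  rw [isStable_iff_isLeastModel (isPositive_cnfProg_union_facts Φ S)] at hstab
  have hcontr : contrA ∉ M := hobsN _ (by simp)
  have hassigned : ∀ j ∈ cnfVars Φ, ∃ b, litA j b ∈ M := fun j hj =>
    exists_litA_mem_of_asgA_mem hS hstab (asgA_mem_of_allA_mem hS hstab (hobsP _ (by simp)) hj)
  refine ⟨fun j => decide (xA j ∈ M), fun C hC => ?_⟩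
  obtain ⟨l, hl, hlM⟩ : ∃ l ∈ C, litA l.1 (!l.2) ∉ M := by
    by_contra! hbody
    refine hcontr (hstab.1.head_mem (Or.inl (mem_cnfProg.2 (Or.inl ⟨C, hC, rfl⟩))) ?_)
    show ∀ b ∈ (clauseRule C).pos, b ∈ M
    rw [clauseRule_pos]
    intro _ hmem
    obtain ⟨l, hl, rfl⟩ := Finset.mem_image.1 hmem
    exact hbody l hl
  obtain ⟨b, hb⟩ := hassigned l.1 (Finset.mem_biUnion.2 ⟨C, hC, Finset.mem_image_of_mem _ hl⟩)
  refine ⟨l, hl, ?_⟩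
  obtain ⟨j, _ | _⟩ := l
  · simpa using hlM
  · cases b
    · exact absurd hb hlM
    · simpa using hb

end Completeness

end LP

/-- a CNF `Φ` is satisfiable iff the abduction problem
`⟨H, P(Φ), {allAssigned; not contr; not inconsistent}, γ ≡ 0⟩` has an admissible
solution. -/
theorem sat_iff_admissible (Φ : LP.CNF) :
    LP.cnfSat Φ ↔
      ∃ S, LP.admissible ↑(LP.cnfProg Φ) (LP.cnfHyp Φ)
        {LP.allA} {LP.contrA, LP.inconA} S :=
  ⟨fun ⟨_, hτ⟩ => ⟨_, LP.admissible_assignmentHyp hτ⟩, fun ⟨_, hS⟩ => LP.cnfSat_of_admissible hS⟩
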